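/- For every k, the Adjacent Hindman Theorem for k colors implies the Increasing Polarized Ramsey Theorem for pairs and k colors: if every g : ℕ → Fin k admits an apart strictly increasing sequence with monochromatic adjacent sums, then every f : ℕ → ℕ → Fin k admits infinite sets H₁, H₂ and a color d with f x₁ x₂ = d for all x₁ ∈ H₁, x₂ ∈ H₂, x₁ < x₂. -/

import Mathlib

/-- λ(n): the 2-adic valuation of n (least exponent in binary expansion). -/
def lam (n : ℕ) : ℕ := padicValNat 2 n

/-- μ(n): ⌊log₂ n⌋ (greatest exponent in binary expansion). -/
def mu (n : ℕ) : ℕ := Nat.log 2 n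

/-- Apartness condition for a sequence. -/
def Apart (h : ℕ → ℕ) : Prop := ∀ i j, i < j → mu (h i) < lam (h j)

/-- Sum of adjacent elements h i + h (i+1) + ... + h j. -/
def adjSum (h : ℕ → ℕ) (i j : ℕ) : ℕ := ∑ t ∈ Finset.Icc i j, h t
/-!
Colour `n` by `f (lam n) (mu n)`. For an apart sequence `h` the binary expansions of the terms
occupy disjoint, increasing blocks of bits, so the adjacent sum `h i + ⋯ + h j` has lowest bit
`lam (h i)` and highest bit `mu (h j)`; a monochromatic family of adjacent sums therefore makes
`f` constant on pairs `(lam (h i), mu (h j))` with `i ≤ j`. Apartness makes both `lam ∘ h` and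
`mu ∘ h` strictly increasing, and `lam (h i) < mu (h j)` forces `i ≤ j`.
-/

lemma lam_le_mu (n : ℕ) : lam n ≤ mu n := padicValNat_le_nat_log n

lemma lam_add {a b : ℕ} (ha : a ≠ 0) (hb : b ≠ 0) (hlt : lam a < lam b) :
    lam (a + b) = lam a := by
  have key := padicValRat.add_eq_of_lt (p := 2) (q := a) (r := b) (by positivity)
    (by positivity) (by positivity) (by simpa [lam, padicValRat.of_nat] using hlt)
  exact_mod_cast key

lemma add_le_of_lt_of_dvd {a b d : ℕ} (hab : a < b) (ha : d ∣ a) (hb : d ∣ b) : a + d ≤ b := by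
  obtain ⟨x, rfl⟩ := ha
  obtain ⟨y, rfl⟩ := hb
  have hxy : x < y := lt_of_mul_lt_mul_left' hab
  nlinarith

lemma mu_add {a b : ℕ} (hb : b ≠ 0) (hab : a < 2 ^ lam b) : mu (a + b) = mu b := by
  have hdvd : 2 ^ lam b ∣ 2 ^ (mu b + 1) := pow_dvd_pow 2 (by have := lam_le_mu b; omega)
  have hgap : b + 2 ^ lam b ≤ 2 ^ (mu b + 1) :=
    add_le_of_lt_of_dvd (Nat.lt_pow_succ_log_self one_lt_two b) pow_padicValNat_dvd hdvd
  exact Nat.log_eq_of_pow_le_of_lt_pow ((Nat.pow_log_le_self 2 hb).trans (by omega)) (by omega)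

section AdjSum

variable {h : ℕ → ℕ} {i j : ℕ}

lemma adjSum_self : adjSum h i i = h i := by simp [adjSum]

lemma adjSum_succ (hij : i ≤ j) : adjSum h i (j + 1) = adjSum h i j + h (j + 1) :=
  Finset.sum_Icc_succ_top (by omega) h

lemma le_adjSum (hij : i ≤ j) : h i ≤ adjSum h i j :=
  Finset.single_le_sum (fun _ _ => Nat.zero_le _) (Finset.mem_Icc.2 ⟨le_rfl, hij⟩)

namespace Apart

lemma strictMono_lam (hap : Apart h) : StrictMono (lam ∘ h) := fun _ _ hab =>
  (lam_le_mu _).trans_lt (hap _ _ hab)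

lemma strictMono_mu (hap : Apart h) : StrictMono (mu ∘ h) := fun _ _ hab =>
  (hap _ _ hab).trans_le (lam_le_mu _)

lemma le_of_lam_lt_mu (hap : Apart h) (hlt : lam (h i) < mu (h j)) : i ≤ j := by
  by_contra! hji
  exact lt_asymm (hap j i hji) hlt

-- `lam 0 = 0`, so apartness forbids zero terms after the first.
lemma ne_zero (hap : Apart h) (hj : 0 < j) : h j ≠ 0 := fun hzero => by
  simpa [hzero, lam] using hap 0 j hj

lemma lam_adjSum (hap : Apart h) (hi : h i ≠ 0) (hij : i ≤ j) :
    lam (adjSum h i j) = lam (h i) := by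
  induction j, hij using Nat.le_induction with
  | base => rw [adjSum_self]
  | succ j hij ih =>
    have hsum : adjSum h i j ≠ 0 := (Nat.pos_of_ne_zero hi).trans_le (le_adjSum hij) |>.ne'
    have hlt : lam (adjSum h i j) < lam (h (j + 1)) :=
      ih ▸ (lam_le_mu _).trans_lt (hap i (j + 1) (by omega))
    rw [adjSum_succ hij, lam_add hsum (hap.ne_zero j.succ_pos) hlt, ih]

lemma mu_adjSum (hap : Apart h) (hij : i ≤ j) : mu (adjSum h i j) = mu (h j) := by
  induction j, hij using Nat.le_induction with
  | base => rw [adjSum_self]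
  | succ j hij ih =>
    rw [adjSum_succ hij, mu_add (hap.ne_zero j.succ_pos)]
    calc adjSum h i j < 2 ^ (mu (adjSum h i j) + 1) := Nat.lt_pow_succ_log_self one_lt_two _
      _ ≤ 2 ^ lam (h (j + 1)) := by
        rw [ih]; exact Nat.pow_le_pow_right two_pos (hap j (j + 1) j.lt_succ_self)

end Apart

end AdjSum

theorem ahtk_implies_ipt2k (k : ℕ)
    (aht : ∀ g : ℕ → Fin k, ∃ h : ℕ → ℕ, StrictMono h ∧ (∀ i, 0 < h i) ∧ Apart h ∧
      ∃ d : Fin k, ∀ i j, i ≤ j → g (adjSum h i j) = d) :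
    ∀ f : ℕ → ℕ → Fin k, ∃ H₁ H₂ : Set ℕ, H₁.Infinite ∧ H₂.Infinite ∧
      ∃ d : Fin k, ∀ x₁ ∈ H₁, ∀ x₂ ∈ H₂, x₁ < x₂ → f x₁ x₂ = d := by
  intro f
  obtain ⟨h, -, hpos, hap, d, hd⟩ := aht fun n => f (lam n) (mu n)
  refine ⟨Set.range (lam ∘ h), Set.range (mu ∘ h),
    Set.infinite_range_of_injective hap.strictMono_lam.injective,
    Set.infinite_range_of_injective hap.strictMono_mu.injective, d, ?_⟩
  rintro _ ⟨i, rfl⟩ _ ⟨j, rfl⟩ hlt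
  have hij := hap.le_of_lam_lt_mu hlt
  simpa [hap.lam_adjSum (hpos i).ne' hij, hap.mu_adjSum hij] using hd i j hij
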